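/- Assume the abc conjecture. Then for every fixed positive integer k, there are only finitely many natural numbers n with n! > k such that n! − k is a powerful number. -/

import Mathlib

/-- The radical of a natural number: the product of its distinct prime factors. -/
def rad (n : ℕ) : ℕ := ∏ p ∈ n.primeFactors, p

/-- A natural number is powerful if every prime dividing it does so at least to the square. -/
def Powerful (n : ℕ) : Prop := ∀ p : ℕ, p.Prime → p ∣ n → p ^ 2 ∣ n

/-- The abc conjecture: for every ε > 0, there are only finitely many triples (a,b,c) of
positive integers with gcd(a,b) = 1, a + b = c, and rad(abc)^(1+ε) < c. -/
def ABCConjecture : Prop :=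
  ∀ ε : ℝ, 0 < ε →
    {t : ℕ × ℕ × ℕ | 0 < t.1 ∧ 0 < t.2.1 ∧ 0 < t.2.2 ∧
      Nat.gcd t.1 t.2.1 = 1 ∧ t.1 + t.2.1 = t.2.2 ∧
      (rad (t.1 * t.2.1 * t.2.2) : ℝ) ^ (1 + ε) < (t.2.2 : ℝ)}.Finite

open Filter


lemma rad_pos (n : ℕ) : 0 < rad n :=
  Finset.prod_pos fun p hp => (Nat.prime_of_mem_primeFactors hp).pos

lemma rad_dvd_self (n : ℕ) : rad n ∣ n := Nat.prod_primeFactors_dvd n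

lemma rad_dvd_rad {a b : ℕ} (hb : b ≠ 0) (h : a ∣ b) : rad a ∣ rad b :=
  Finset.prod_dvd_prod_of_subset _ _ _ (Nat.primeFactors_mono h hb)

lemma rad_mul_dvd {a b : ℕ} (ha : a ≠ 0) (hb : b ≠ 0) : rad (a * b) ∣ rad a * rad b := by
  unfold rad
  rw [Nat.primeFactors_mul ha hb, ← Finset.union_sdiff_self_eq_union,
    Finset.prod_union Finset.disjoint_sdiff]
  exact mul_dvd_mul dvd_rfl
    (Finset.prod_dvd_prod_of_subset _ _ _ (Finset.sdiff_subset))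

lemma rad_sq_dvd_of_powerful {m : ℕ} (h : Powerful m) : rad m ^ 2 ∣ m := by
  unfold rad
  rw [← Finset.prod_pow]
  have : ∀ s : Finset ℕ, s ⊆ m.primeFactors → (∏ p ∈ s, p ^ 2) ∣ m := by
    intro s
    induction s using Finset.induction with
    | empty => simp
    | @insert a s ha ih =>
      intro hsub
      have hamem := hsub (Finset.mem_insert_self a s)
      have hap : a.Prime := Nat.prime_of_mem_primeFactors hamem
      have hsm : s ⊆ m.primeFactors := fun x hx => hsub (Finset.mem_insert_of_mem hx)
      rw [Finset.prod_insert ha]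
      have hcop : Nat.Coprime (a ^ 2) (∏ p ∈ s, p ^ 2) := by
        apply Nat.Coprime.prod_right
        intro q hq
        have hqp : q.Prime := Nat.prime_of_mem_primeFactors (hsm hq)
        exact Nat.Coprime.pow _ _ ((Nat.coprime_primes hap hqp).2 (by rintro rfl; exact ha hq))
      exact Nat.Coprime.mul_dvd_of_dvd_of_dvd hcop
        (h a hap (Nat.dvd_of_mem_primeFactors hamem)) (ih hsm)
  exact this _ (subset_refl _)

lemma rad_factorial_le (n : ℕ) : rad (n.factorial) ≤ 4 ^ n := by
  have h1 : rad (n.factorial) ∣ primorial n := by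
    unfold rad primorial
    apply Finset.prod_dvd_prod_of_subset
    intro p hp
    have hpp := Nat.prime_of_mem_primeFactors hp
    have := (Nat.Prime.dvd_factorial hpp).1 (Nat.dvd_of_mem_primeFactors hp)
    simp [Finset.mem_filter, Nat.lt_succ_iff, this, hpp]
  have h2 : 0 < primorial n :=
    Finset.prod_pos fun p hp => (Finset.mem_filter.1 hp).2.pos
  exact le_trans (Nat.le_of_dvd h2 h1) (primorial_le_4_pow n)

lemma eventually_lt_factorial (C B : ℕ) : ∀ᶠ n in Filter.atTop, C * B ^ n < n.factorial := by
  have h := FloorSemiring.tendsto_pow_div_factorial_atTop (K := ℝ) (B : ℝ)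
  have h2 := h.eventually (gt_mem_nhds (show (0:ℝ) < 1 / (C + 1) by positivity))
  filter_upwards [h2] with n hn
  have hf : (0:ℝ) < (n.factorial : ℝ) := by exact_mod_cast n.factorial_pos
  rw [div_lt_div_iff₀ hf (by positivity)] at hn
  have : (C:ℝ) * (B:ℝ) ^ n < (n.factorial : ℝ) := by nlinarith [pow_nonneg (by positivity : (0:ℝ) ≤ (B:ℝ)) n]
  exact_mod_cast this

theorem factorial_sub_powerful_finite (habc : ABCConjecture) (k : ℕ) (hk : 0 < k) :
    {n : ℕ | k < n.factorial ∧ Powerful (n.factorial - k)}.Finite := by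
  obtain ⟨N0, hN0⟩ := eventually_atTop.1 (eventually_lt_factorial (k ^ 4) 4096)
  set N : ℕ := max N0 (k + 1) with hN
  have hS := habc (1/2) (by norm_num)
  set f : ℕ → ℕ × ℕ × ℕ := fun n => (n.factorial / k - 1, 1, n.factorial / k) with hf
  set T : Set ℕ := {n : ℕ | k < n.factorial ∧ Powerful (n.factorial - k)} with hT
  have hsplit : T ⊆ (Set.Iio N) ∪ (T ∩ Set.Ici N) := by
    intro n hn
    rcases lt_or_ge n N with h | h
    · exact Or.inl h
    · exact Or.inr ⟨hn, h⟩
  apply Set.Finite.subset _ hsplit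
  apply Set.Finite.union (Set.finite_Iio N)
  have key : ∀ n ∈ T ∩ Set.Ici N, f n ∈ {t : ℕ × ℕ × ℕ | 0 < t.1 ∧ 0 < t.2.1 ∧ 0 < t.2.2 ∧
      Nat.gcd t.1 t.2.1 = 1 ∧ t.1 + t.2.1 = t.2.2 ∧
      (rad (t.1 * t.2.1 * t.2.2) : ℝ) ^ ((1:ℝ) + 1/2) < (t.2.2 : ℝ)} := by
    rintro n ⟨⟨hkn, hpow⟩, hnN⟩
    have hkdvd : k ∣ n.factorial :=
      Nat.dvd_factorial hk (le_trans (Nat.le_succ k) (le_trans (le_max_right N0 (k+1)) hnN))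
    obtain ⟨c, hfac⟩ := hkdvd
    have hck : n.factorial / k = c := by rw [hfac]; exact Nat.mul_div_cancel_left c hk
    have hgrow : k ^ 4 * 4096 ^ n < n.factorial := hN0 n (le_trans (le_max_left _ _) hnN)
    have h4096 : 1 ≤ 4096 ^ n := Nat.one_le_iff_ne_zero.2 (pow_ne_zero n (by norm_num))
    have hc2 : 2 ≤ c := by
      by_contra hlt
      push_neg at hlt
      interval_cases c <;> nlinarith [hk, pow_pos hk 4]
    obtain ⟨a, rfl⟩ : ∃ a, c = a + 1 := ⟨c - 1, by omega⟩
    have ha0 : 0 < a := by omega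
    have hma : n.factorial - k = k * a := by
      rw [hfac, Nat.mul_succ, Nat.add_sub_cancel]
    rw [hma] at hpow
    have hm0 : k * a ≠ 0 := by positivity
    -- nat inequality
    have hadvd : a ∣ k * a := dvd_mul_left a k
    have hcdvd : (a + 1) ∣ n.factorial := Dvd.intro_left k hfac.symm
    have h1 : rad (a * (a + 1)) ≤ rad (k * a) * 4 ^ n := by
      calc rad (a * (a + 1)) ≤ rad a * rad (a + 1) :=
            Nat.le_of_dvd (Nat.mul_pos (rad_pos a) (rad_pos (a+1)))
              (rad_mul_dvd (by omega) (by omega))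
        _ ≤ rad (k * a) * 4 ^ n := by
            apply Nat.mul_le_mul
            · exact Nat.le_of_dvd (rad_pos _) (rad_dvd_rad hm0 hadvd)
            · exact le_trans (Nat.le_of_dvd (rad_pos _)
                (rad_dvd_rad n.factorial_pos.ne' hcdvd)) (rad_factorial_le n)
    have h2 : rad (k * a) ^ 2 ≤ k * a :=
      Nat.le_of_dvd (Nat.pos_of_ne_zero hm0) (rad_sq_dvd_of_powerful hpow)
    have h3 : k * a ≤ n.factorial := by
      rw [hfac, Nat.mul_succ]; omega
    have hR6 : rad (a * (a + 1)) ^ 6 ≤ n.factorial ^ 3 * 4096 ^ n := by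
      calc rad (a * (a + 1)) ^ 6 ≤ (rad (k * a) * 4 ^ n) ^ 6 := Nat.pow_le_pow_left h1 6
        _ = (rad (k * a) ^ 2) ^ 3 * ((4 ^ 6) ^ n) := by
            rw [mul_pow, ← pow_mul, ← pow_mul, ← pow_mul, mul_comm n 6]
        _ ≤ (k * a) ^ 3 * ((4 ^ 6) ^ n) := by gcongr
        _ ≤ n.factorial ^ 3 * 4096 ^ n := by norm_num; gcongr
    have hR6c : rad (a * (a + 1)) ^ 6 < (a + 1) ^ 4 := by
      have hh : k ^ 4 * rad (a * (a + 1)) ^ 6 < k ^ 4 * (a + 1) ^ 4 := by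
        calc k ^ 4 * rad (a * (a + 1)) ^ 6 ≤ k ^ 4 * (n.factorial ^ 3 * 4096 ^ n) := by gcongr
          _ = (k ^ 4 * 4096 ^ n) * n.factorial ^ 3 := by ring
          _ < n.factorial * n.factorial ^ 3 := by
              exact Nat.mul_lt_mul_of_lt_of_le hgrow (le_refl _) (pow_pos n.factorial_pos 3)
          _ = (k * (a + 1)) ^ 4 := by rw [← hfac]; ring
          _ = k ^ 4 * (a + 1) ^ 4 := by ring
      exact Nat.lt_of_mul_lt_mul_left hh
    have hR3 : rad (a * (a + 1)) ^ 3 < (a + 1) ^ 2 := by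
      have h6 : (rad (a * (a + 1)) ^ 3) ^ 2 < ((a + 1) ^ 2) ^ 2 := by
        calc (rad (a * (a + 1)) ^ 3) ^ 2 = rad (a * (a + 1)) ^ 6 := by ring
          _ < (a + 1) ^ 4 := hR6c
          _ = ((a + 1) ^ 2) ^ 2 := by ring
      exact lt_of_pow_lt_pow_left₀ 2 (Nat.zero_le _) h6
    -- assemble
    have hfn : f n = (a, 1, a + 1) := by rw [hf]; simp [hck]
    rw [hfn]
    refine ⟨ha0, one_pos, a.succ_pos, Nat.gcd_one_right a, rfl, ?_⟩
    show (rad (a * 1 * (a + 1)) : ℝ) ^ ((1:ℝ) + 1/2) < ((a + 1 : ℕ) : ℝ)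
    rw [mul_one]
    have hx0 : (0:ℝ) ≤ (rad (a * (a + 1)) : ℝ) := Nat.cast_nonneg _
    have hsq : ((rad (a * (a + 1)) : ℝ) ^ ((1:ℝ) + 1/2)) ^ (2:ℕ)
        = (rad (a * (a + 1)) : ℝ) ^ (3:ℕ) := by
      rw [← Real.rpow_natCast ((rad (a * (a + 1)) : ℝ) ^ ((1:ℝ) + 1/2)) 2, ← Real.rpow_mul hx0,
        ← Real.rpow_natCast (rad (a * (a + 1)) : ℝ) 3]
      norm_num
    have hlt : ((rad (a * (a + 1)) : ℝ) ^ ((1:ℝ) + 1/2)) ^ (2:ℕ) < ((a : ℝ) + 1) ^ (2:ℕ) := by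
      rw [hsq]
      exact_mod_cast hR3
    have := lt_of_pow_lt_pow_left₀ 2 (by positivity : (0:ℝ) ≤ (a:ℝ) + 1) hlt
    exact_mod_cast this
  -- injectivity and finiteness
  have hmono : Set.InjOn f (Set.Ici N) := by
    intro x hx y hy hxy
    have hcx : x.factorial / k = y.factorial / k := congrArg (fun t => t.2.2) hxy
    by_contra hne
    rcases Nat.lt_or_ge x y with h | h
    · have hxf : x.factorial < y.factorial := (Nat.factorial_lt (by
        have := le_trans (le_max_right N0 (k+1)) hx; omega)).2 h
      have := Nat.div_lt_div_of_lt_of_dvd (Nat.dvd_factorial hk (by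
        have := le_trans (le_max_right N0 (k+1)) hy; omega)) hxf
      omega
    · have hyx : y < x := by omega
      have hyf : y.factorial < x.factorial := (Nat.factorial_lt (by
        have := le_trans (le_max_right N0 (k+1)) hy; omega)).2 hyx
      have := Nat.div_lt_div_of_lt_of_dvd (Nat.dvd_factorial hk (by
        have := le_trans (le_max_right N0 (k+1)) hx; omega)) hyf
      omega
  apply Set.Finite.of_finite_image _ (hmono.mono Set.inter_subset_right)
  exact hS.subset (Set.image_subset_iff.2 fun n hn => Set.mem_preimage.2 (key n hn))
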